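/- arXiv:1507.08646 — 2 statements merged into one kernel-verified Lean document; each statement's English description precedes it below -/
import Mathlib

section
/- Let n be a positive integer, N = 2n, and ε a primitive 2n-th root of unity in ℂ. For any integer l with 1 ≤ l ≤ 2n and any z, w ∈ ℂ with z^(2n) ≠ w^(2n), we have ∑_{k=0}^{2n-1} ε^(kl)/(z + ε^k w) = 2n·(-1)^l·z^(l-1)·w^(2n-l)/(z^(2n) - w^(2n)). -/
open Finset

theorem stmt_2 (n : ℕ) (hn : 0 < n) (ε : ℂ) (hε : IsPrimitiveRoot ε (2 * n))
    (l : ℕ) (hl1 : 1 ≤ l) (hl2 : l ≤ 2 * n) (z w : ℂ)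
    (hzw : z ^ (2 * n) ≠ w ^ (2 * n)) :
    ∑ k ∈ Finset.range (2 * n), ε ^ (k * l) / (z + ε ^ k * w) =
      (2 * n : ℂ) * (-1) ^ l * z ^ (l - 1) * w ^ (2 * n - l) /
        (z ^ (2 * n) - w ^ (2 * n)) := by
  have hεN : ε ^ (2 * n) = 1 := hε.pow_eq_one
  have hD : z ^ (2 * n) - w ^ (2 * n) ≠ 0 := sub_ne_zero.mpr hzw
  have hneg : ∀ k : ℕ, (-(ε ^ k * w)) ^ (2 * n) = w ^ (2 * n) := by
    intro k
    rw [neg_pow, Even.neg_one_pow (even_two_mul n), one_mul, mul_pow, ← pow_mul,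
      mul_comm k (2 * n), pow_mul, hεN, one_pow, one_mul]
  have hden : ∀ k : ℕ, z + ε ^ k * w ≠ 0 := by
    intro k h
    apply hzw
    rw [eq_neg_of_add_eq_zero_left h, hneg k]
  have hS : ∀ k : ℕ, (∑ i ∈ range (2 * n), z ^ i * (-(ε ^ k * w)) ^ (2 * n - 1 - i)) *
      (z + ε ^ k * w) = z ^ (2 * n) - w ^ (2 * n) := by
    intro k
    have h := geom_sum₂_mul z (-(ε ^ k * w)) (2 * n)
    rw [sub_neg_eq_add] at h
    rw [h, hneg]
  have key : ∀ k, ε ^ (k * l) / (z + ε ^ k * w)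
      = (∑ i ∈ range (2 * n), ε ^ (k * l) * (z ^ i * (-(ε ^ k * w)) ^ (2 * n - 1 - i))) /
        (z ^ (2 * n) - w ^ (2 * n)) := by
    intro k
    rw [div_eq_div_iff (hden k) hD, ← Finset.mul_sum, mul_assoc, hS k]
  simp_rw [key]
  rw [← Finset.sum_div]
  congr 1
  rw [Finset.sum_comm]
  have hterm : ∀ i k : ℕ, ε ^ (k * l) * (z ^ i * (-(ε ^ k * w)) ^ (2 * n - 1 - i))
      = (-1) ^ (2 * n - 1 - i) * z ^ i * w ^ (2 * n - 1 - i) *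
        (ε ^ (l + (2 * n - 1 - i))) ^ k := by
    intro i k
    rw [neg_pow, mul_pow]
    ring
  simp_rw [hterm, ← Finset.mul_sum]
  have hgeo : ∀ m : ℕ, ∑ k ∈ range (2 * n), (ε ^ m) ^ k =
      if 2 * n ∣ m then ((2 * n : ℕ) : ℂ) else 0 := by
    intro m
    by_cases hdvd : 2 * n ∣ m
    · rw [if_pos hdvd]
      obtain ⟨c, rfl⟩ := hdvd
      have h1 : ε ^ (2 * n * c) = 1 := by rw [pow_mul, hεN, one_pow]
      simp [h1]
    · rw [if_neg hdvd]
      have hne : ε ^ m ≠ 1 := fun h => hdvd ((hε.pow_eq_one_iff_dvd m).mp h)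
      rw [geom_sum_eq hne, ← pow_mul, mul_comm m (2 * n), pow_mul, hεN, one_pow]
      simp
  simp_rw [hgeo]
  rw [Finset.sum_eq_single (l - 1)]
  · have h1 : 2 * n ∣ (l + (2 * n - 1 - (l - 1))) := by
      have he : l + (2 * n - 1 - (l - 1)) = 2 * n := by omega
      rw [he]
    rw [if_pos h1]
    have h2 : 2 * n - 1 - (l - 1) = 2 * n - l := by omega
    rw [h2]
    have hll : ((-1 : ℂ)) ^ l * (-1) ^ l = 1 := by
      rw [← pow_add]; exact Even.neg_one_pow ⟨l, rfl⟩
    have h3 : ((-1 : ℂ)) ^ (2 * n - l) = (-1 : ℂ) ^ l := by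
      calc ((-1 : ℂ)) ^ (2 * n - l) = (-1) ^ (2 * n - l) * ((-1) ^ l * (-1) ^ l) := by
            rw [hll, mul_one]
        _ = (-1) ^ (2 * n - l + l) * (-1) ^ l := by rw [pow_add]; ring
        _ = (-1 : ℂ) ^ l := by
            rw [show 2 * n - l + l = 2 * n from by omega,
              Even.neg_one_pow (even_two_mul n), one_mul]
    rw [h3]
    push_cast
    ring
  · intro i hi hne
    rw [Finset.mem_range] at hi
    have hnd : ¬ (2 * n ∣ (l + (2 * n - 1 - i))) := by
      intro hd
      have hpos : l + (2 * n - 1 - i) ≠ 0 := by omega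
      have hlt : l + (2 * n - 1 - i) < 2 * (2 * n) := by omega
      have := Nat.eq_of_dvd_of_lt_two_mul hpos hd hlt
      omega
    rw [if_neg hnd, mul_zero]
  · intro h
    exact absurd (Finset.mem_range.mpr (by omega)) h
end

section
/- Let n ≥ 1, ε a primitive 2n-th root of unity, and z, w ∈ ℂ with z^{2n} ≠ w^{2n}. For 1 ≤ a, b ≤ 2n, define S_{a,b}(z,w) = ∑_{j=0}^{2n-1} ∑_{k=0}^{2n-1} ε^{-ja} ε^{kb} / (ε^j z + ε^k w). Then S_{a,b}(z,w) = (2n)²·(-1)^b·z^a·w^{2n-b}/(z^{2n} - w^{2n}) if a = b - 1 (for 1 ≤ a ≤ 2n-1), and S_{a,b}(z,w) = 0 if a ≢ b - 1 (mod 2n). -/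
open Finset

lemma root_sum (n : ℕ) (hn : 1 ≤ n) (ε : ℂ) (hε : IsPrimitiveRoot ε (2*n)) (t : ℤ) :
    ∑ k ∈ range (2*n), ε ^ ((k:ℤ) * t) = if ((2*n : ℕ) : ℤ) ∣ t then ((2*n : ℕ) : ℂ) else 0 := by
  have hc : ∀ k ∈ range (2*n), ε ^ ((k:ℤ)*t) = (ε ^ t) ^ k := by
    intro k _
    rw [mul_comm, zpow_mul, ← zpow_natCast (ε^t) k]
  rw [Finset.sum_congr rfl hc]
  by_cases h : ((2*n:ℕ):ℤ) ∣ t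
  · rw [if_pos h, (hε.zpow_eq_one_iff_dvd t).2 h]
    simp
  · rw [if_neg h]
    have h1 : ε ^ t ≠ 1 := fun hh => h ((hε.zpow_eq_one_iff_dvd t).1 hh)
    rw [geom_sum_eq h1]
    have h2 : (ε ^ t) ^ (2*n) = 1 := by
      rw [← zpow_natCast, ← zpow_mul, mul_comm, zpow_mul, zpow_natCast, hε.pow_eq_one, one_zpow]
    simp [h2]

lemma single_sum (n : ℕ) (hn : 1 ≤ n) (ε : ℂ) (hε : IsPrimitiveRoot ε (2*n))
    (Z w : ℂ) (hZ : Z ^ (2*n) ≠ w ^ (2*n)) (l : ℕ) (hl1 : 1 ≤ l) (hl2 : l ≤ 2*n) :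
    ∑ k ∈ range (2*n), ε ^ ((k:ℤ) * l) / (Z + ε ^ k * w)
      = ((2*n : ℕ) : ℂ) * (-1)^l * Z^(l-1) * w^(2*n-l) / (Z^(2*n) - w^(2*n)) := by
  have hε0 : ε ≠ 0 := hε.ne_zero (by omega)
  have hD : Z^(2*n) - w^(2*n) ≠ 0 := sub_ne_zero.2 hZ
  have hpow : ∀ k : ℕ, (-(ε ^ k * w)) ^ (2*n) = w ^ (2*n) := by
    intro k
    have e1 : ((ε:ℂ) ^ k) ^ (2*n) = 1 := by
      rw [← pow_mul, mul_comm, pow_mul, hε.pow_eq_one, one_pow]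
    rw [neg_pow, mul_pow, e1, Even.neg_one_pow ⟨n, by ring⟩, one_mul, one_mul]
  have hden : ∀ k : ℕ, Z + ε ^ k * w ≠ 0 := by
    intro k h
    apply hZ
    have : Z = -(ε ^ k * w) := by linear_combination h
    rw [this, hpow]
  have step : ∀ k ∈ range (2*n), ε ^ ((k:ℤ) * l) / (Z + ε ^ k * w)
      = (∑ m ∈ range (2*n), ε ^ ((k:ℤ) * ((l:ℤ) + (2*(n:ℤ)-1-(m:ℤ))))
            * ((-1)^(2*n-1-m) * Z^m * w^(2*n-1-m)))
          / (Z^(2*n) - w^(2*n)) := by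
    intro k _
    have hg := geom_sum₂_mul Z (-(ε ^ k * w)) (2*n)
    rw [hpow, sub_neg_eq_add] at hg
    rw [div_eq_div_iff (hden k) hD, ← hg, ← mul_assoc]
    congr 1
    rw [Finset.mul_sum]
    apply Finset.sum_congr rfl
    intro m hm
    have hmlt : m < 2*n := Finset.mem_range.1 hm
    have hcast : ((2*n-1-m : ℕ):ℤ) = 2*(n:ℤ)-1-(m:ℤ) := by omega
    have e2 : ((k:ℤ) * ((l:ℤ) + (2*(n:ℤ)-1-(m:ℤ)))) = (k:ℤ)*l + (k:ℤ)*((2*n-1-m : ℕ):ℤ) := by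
      rw [hcast]; ring
    have e3 : ε ^ ((k:ℤ)*((2*n-1-m : ℕ):ℤ)) = (ε^k)^(2*n-1-m) := by
      rw [← Nat.cast_mul, zpow_natCast, pow_mul]
    rw [e2, zpow_add₀ hε0, e3, neg_pow, mul_pow]
    ring
  rw [Finset.sum_congr rfl step, ← Finset.sum_div, Finset.sum_comm]
  congr 1
  have key : ∀ m ∈ range (2*n),
      ∑ k ∈ range (2*n), ε ^ ((k:ℤ) * ((l:ℤ) + (2*(n:ℤ)-1-(m:ℤ))))
          * ((-1)^(2*n-1-m) * Z^m * w^(2*n-1-m))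
        = (if ((2*n : ℕ) : ℤ) ∣ ((l:ℤ) + (2*(n:ℤ)-1-(m:ℤ))) then ((2*n : ℕ) : ℂ) else 0)
            * ((-1)^(2*n-1-m) * Z^m * w^(2*n-1-m)) := by
    intro m _
    rw [← Finset.sum_mul, root_sum n hn ε hε]
  rw [Finset.sum_congr rfl key]
  rw [Finset.sum_eq_single_of_mem (l-1) (Finset.mem_range.2 (by omega))]
  · have h1 : 2*n-1-(l-1) = 2*n-l := by omega
    have h2 : ((2*n : ℕ) : ℤ) ∣ ((l:ℤ) + (2*(n:ℤ)-1-((l-1:ℕ):ℤ))) := by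
      have : ((l:ℤ) + (2*(n:ℤ)-1-((l-1:ℕ):ℤ))) = ((2*n : ℕ) : ℤ) := by
        have : ((l-1:ℕ):ℤ) = (l:ℤ)-1 := by omega
        rw [this]; push_cast; ring
      rw [this]
    rw [if_pos h2, h1]
    have h4 : ((-1:ℂ))^(2*n-l) * (-1)^l = 1 := by
      rw [← pow_add]
      have e : 2*n-l+l = 2*n := by omega
      rw [e, pow_mul]; norm_num
    have h5 : ((-1:ℂ))^l * (-1)^l = 1 := by
      rw [← pow_add]
      exact Even.neg_one_pow ⟨l, rfl⟩
    have h3 : ((-1:ℂ))^(2*n-l) = (-1)^l := by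
      calc ((-1:ℂ))^(2*n-l) = (-1)^(2*n-l) * ((-1)^l * (-1)^l) := by rw [h5, mul_one]
        _ = ((-1)^(2*n-l) * (-1)^l) * (-1)^l := by ring
        _ = (-1)^l := by rw [h4, one_mul]
    rw [h3]; ring
  · intro m hm hne
    have hmlt : m < 2*n := Finset.mem_range.1 hm
    have hnd : ¬ ((2*n : ℕ) : ℤ) ∣ ((l:ℤ) + (2*(n:ℤ)-1-(m:ℤ))) := by
      have hre : ((l:ℤ) + (2*(n:ℤ)-1-(m:ℤ))) = ((l + (2*n-1-m) : ℕ) : ℤ) := by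
        push_cast; omega
      rw [hre, Int.natCast_dvd_natCast]
      rintro ⟨c, hc⟩
      have hc2 : c < 2 := by
        by_contra hge
        push_neg at hge
        have h6 : 2*n*2 ≤ 2*n*c := Nat.mul_le_mul_left (2*n) hge
        omega
      interval_cases c <;> omega
    rw [if_neg hnd, zero_mul]


/-- The double sum `S_{a,b}(z,w) = ∑_{j,k=0}^{2n-1} ε^{-ja} ε^{kb}/(ε^j z + ε^k w)`
for a primitive 2n-th root of unity ε and `z^{2n} ≠ w^{2n}`:
it equals `(2n)²·(-1)^b·z^a·w^{2n-b}/(z^{2n}-w^{2n})` when `a = b - 1`, and `0`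
when `a ≢ b - 1 (mod 2n)`. -/
theorem stmt_14 (n : ℕ) (hn : 1 ≤ n) (ε : ℂ) (hε : IsPrimitiveRoot ε (2 * n))
    (z w : ℂ) (hzw : z ^ (2 * n) ≠ w ^ (2 * n))
    (a b : ℕ) (ha1 : 1 ≤ a) (ha2 : a ≤ 2 * n) (hb1 : 1 ≤ b) (hb2 : b ≤ 2 * n) :
    ((a : ℤ) = (b : ℤ) - 1 →
      ∑ j ∈ Finset.range (2 * n), ∑ k ∈ Finset.range (2 * n),
          ε ^ (-(j : ℤ) * a) * ε ^ ((k : ℤ) * b) / (ε ^ j * z + ε ^ k * w) =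
        ((2 * n : ℂ)) ^ 2 * (-1) ^ b * z ^ a * w ^ (2 * n - b) /
          (z ^ (2 * n) - w ^ (2 * n))) ∧
    (¬ ((a : ℤ) ≡ (b : ℤ) - 1 [ZMOD (2 * n)]) →
      ∑ j ∈ Finset.range (2 * n), ∑ k ∈ Finset.range (2 * n),
          ε ^ (-(j : ℤ) * a) * ε ^ ((k : ℤ) * b) / (ε ^ j * z + ε ^ k * w) = 0) := by
  have hε0 : ε ≠ 0 := hε.ne_zero (by omega)
  have hZpow : ∀ j : ℕ, (ε^j * z)^(2*n) = z^(2*n) := by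
    intro j
    have e1 : ((ε:ℂ) ^ j) ^ (2*n) = 1 := by
      rw [← pow_mul, mul_comm, pow_mul, hε.pow_eq_one, one_pow]
    rw [mul_pow, e1, one_mul]
  have hstep : ∀ j ∈ range (2*n),
      ∑ k ∈ range (2*n), ε ^ (-(j:ℤ)*a) * ε^((k:ℤ)*b) / (ε^j * z + ε^k * w)
        = (((2*n:ℕ):ℂ) * (-1)^b * z^(b-1) * w^(2*n-b) / (z^(2*n) - w^(2*n)))
            * ε^((j:ℤ)*((b:ℤ)-1-(a:ℤ))) := by
    intro j _
    have hassoc : ∀ k ∈ range (2*n), ε ^ (-(j:ℤ)*a) * ε^((k:ℤ)*b) / (ε^j * z + ε^k * w)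
        = ε ^ (-(j:ℤ)*a) * (ε^((k:ℤ)*b) / (ε^j * z + ε^k * w)) :=
      fun k _ => mul_div_assoc _ _ _
    rw [Finset.sum_congr rfl hassoc, ← Finset.mul_sum,
      single_sum n hn ε hε (ε^j * z) w (by rw [hZpow]; exact hzw) b hb1 hb2, hZpow, mul_pow]
    have eA : ε ^ (-(j:ℤ)*a) * (ε^j)^(b-1) = ε^((j:ℤ)*((b:ℤ)-1-(a:ℤ))) := by
      have e2 : ((ε:ℂ)^j)^(b-1) = ε^(((j:ℤ))*((b:ℤ)-1)) := by
        rw [← pow_mul, ← zpow_natCast ε (j*(b-1))]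
        congr 1
        push_cast [Nat.cast_sub hb1]
        ring
      rw [e2, ← zpow_add₀ hε0]
      congr 1
      ring
    linear_combination (((2*n:ℕ):ℂ) * (-1)^b * z^(b-1) * w^(2*n-b) / (z^(2*n)-w^(2*n))) * eA
  constructor
  · intro ha
    rw [Finset.sum_congr rfl hstep, ← Finset.mul_sum, root_sum n hn ε hε ((b:ℤ)-1-(a:ℤ)),
      if_pos (by rw [show (b:ℤ)-1-(a:ℤ) = 0 from by omega]; exact dvd_zero _),
      show b - 1 = a from by omega]
    push_cast
    ring
  · intro h
    rw [Finset.sum_congr rfl hstep, ← Finset.mul_sum, root_sum n hn ε hε ((b:ℤ)-1-(a:ℤ)),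
      if_neg, mul_zero]
    intro hdvd
    apply h
    rw [Int.modEq_iff_dvd]
    have e3 : ((2*n:ℕ):ℤ) = 2*(n:ℤ) := by push_cast; ring
    rw [e3] at hdvd
    exact hdvd
end
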